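/- arXiv:2110.00915 — 2 statements merged into one kernel-verified Lean document; each statement's English description precedes it below -/
import Mathlib

section
/- (Proposition 1, relative degree 1.) Let x be a closed-loop trajectory of the sampled-data control-affine system with h(x(0)) ≥ 0. Suppose that for each k ∈ ℕ there exist a set S_k ⊆ ℝⁿ (an over-approximation of the reachable tube over the sampling interval) and a real margin φ_k such that: (i) x(t) ∈ S_k for all t ∈ [t_k, t_{k+1}]; (ii) ξ(x′, u) − ξ(x_k, u) ≥ φ_k for every x′ ∈ S_k and every u ∈ U; and (iii) the applied input satisfies u_k ∈ U and the sampled-data CBF condition ξ(x_k, u_k) + φ_k ≥ 0, i.e. L_f h(x_k) + L_g h(x_k) u_k + γ h(x_k) + φ_k ≥ 0. Then h(x(t)) ≥ 0 for all t ≥ 0. -/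
open Set Filter

noncomputable section

/-- `ℝⁿ` as a Euclidean space. -/
abbrev E (n : ℕ) : Type := EuclideanSpace ℝ (Fin n)

/-- `ξ(x,u) = L_f h(x) + L_g h(x) u + γ h(x)`, where `L_f h(x) = ∇h(x)·f(x)` and
`L_g h(x) u = ∇h(x)·(g(x)u)`. -/
noncomputable def xi {n m : ℕ} (f : E n → E n) (g : E n → E m →L[ℝ] E n)
    (h : E n → ℝ) (γ : ℝ) (p : E n) (v : E m) : ℝ :=
  fderiv ℝ h p (f p) + fderiv ℝ h p (g p v) + γ * h p

/-! The comparison function `z(t) = h(x(t)) e^{γt}` has derivative `e^{γt} ξ(x(t), u_k)` on each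
open sampling interval, and there `ξ(x(t), u_k) ≥ ξ(x_k, u_k) + φ_k ≥ 0` because `x(t) ∈ S_k`.
So `z` is nondecreasing on every `[t_k, t_{k+1}]`, hence, gluing the intervals, on `[0, ∞)`,
and `h(x(t))` has the sign of `z(t) ≥ z(0) = h(x(0)) ≥ 0`. -/

section Gluing

variable {α β : Type*} [LinearOrder α] [Preorder β] {f : α → β} {t : ℕ → α}

theorem monotoneOn_Icc_of_monotoneOn_Icc_succ (ht : Monotone t)
    (hf : ∀ k, MonotoneOn f (Icc (t k) (t (k + 1)))) (k : ℕ) :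
    MonotoneOn f (Icc (t 0) (t k)) := by
  induction k with
  | zero => simp [Icc_self]
  | succ k ih =>
    rw [← Icc_union_Icc_eq_Icc (ht (Nat.zero_le k)) (ht k.le_succ)]
    exact ih.union_right (hf k) (isGreatest_Icc (ht (Nat.zero_le k)))
      (isLeast_Icc (ht k.le_succ))

theorem monotoneOn_Ici_of_monotoneOn_Icc_succ (ht : Monotone t) (htop : Tendsto t atTop atTop)
    (hf : ∀ k, MonotoneOn f (Icc (t k) (t (k + 1)))) :
    MonotoneOn f (Ici (t 0)) := by
  intro a ha b hb hab
  obtain ⟨k, hk⟩ := (htop.eventually_ge_atTop b).exists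
  exact monotoneOn_Icc_of_monotoneOn_Icc_succ ht hf k ⟨ha, hab.trans hk⟩ ⟨hb, hk⟩ hab

end Gluing

theorem hasDerivAt_mul_exp_xi {n m : ℕ} {f : E n → E n} {g : E n → E m →L[ℝ] E n}
    {h : E n → ℝ} {γ : ℝ} {x : ℝ → E n} {v : E m} {s : ℝ}
    (hx : HasDerivAt x (f (x s) + g (x s) v) s) (hh : DifferentiableAt ℝ h (x s)) :
    HasDerivAt (fun τ ↦ h (x τ) * Real.exp (γ * τ))
      (Real.exp (γ * s) * xi f g h γ (x s) v) s := by
  have hhx : HasDerivAt (fun τ ↦ h (x τ)) (fderiv ℝ h (x s) (f (x s) + g (x s) v)) s :=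
    hh.hasFDerivAt.comp_hasDerivAt s hx
  have hexp : HasDerivAt (fun τ ↦ Real.exp (γ * τ)) (Real.exp (γ * s) * γ) s := by
    simpa using ((hasDerivAt_id s).const_mul γ).exp
  refine (hhx.mul hexp).congr_deriv ?_
  simp only [xi, map_add]
  ring

theorem stmt_2_general {n m : ℕ} (f : E n → E n) (g : E n → E m →L[ℝ] E n)
    (U : Set (E m)) (h : E n → ℝ) (hh : ContDiff ℝ 1 h) (γ : ℝ)
    (t : ℕ → ℝ) (ht0 : t 0 = 0) (htmono : StrictMono t)
    (httop : Tendsto t atTop atTop)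
    (u : ℕ → E m)
    (x : ℝ → E n) (hxc : ContinuousOn x (Ici (0 : ℝ)))
    (hode : ∀ k, ∀ s ∈ Ioo (t k) (t (k + 1)),
      HasDerivAt x (f (x s) + g (x s) (u k)) s)
    (hinit : 0 ≤ h (x 0))
    (S : ℕ → Set (E n)) (φ : ℕ → ℝ)
    (hreach : ∀ k, ∀ s ∈ Icc (t k) (t (k + 1)), x s ∈ S k)
    (hmargin : ∀ k, ∀ x' ∈ S k, ∀ v ∈ U,
      φ k ≤ xi f g h γ x' v - xi f g h γ (x (t k)) v)
    (huU : ∀ k, u k ∈ U)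
    (hcbf : ∀ k, 0 ≤ xi f g h γ (x (t k)) (u k) + φ k) :
    ∀ s, 0 ≤ s → 0 ≤ h (x s) := by
  set z : ℝ → ℝ := fun τ ↦ h (x τ) * Real.exp (γ * τ)
  have hcont : ContinuousOn z (Ici 0) :=
    (hh.continuous.comp_continuousOn hxc).mul (by fun_prop)
  have hstep : ∀ k, MonotoneOn z (Icc (t k) (t (k + 1))) := by
    intro k
    have hsub : Icc (t k) (t (k + 1)) ⊆ Ici 0 := fun τ hτ ↦
      (ht0 ▸ htmono.monotone k.zero_le).trans hτ.1
    refine monotoneOn_of_hasDerivWithinAt_nonneg (convex_Icc _ _) (hcont.mono hsub)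
      (f' := fun τ ↦ Real.exp (γ * τ) * xi f g h γ (x τ) (u k)) (fun τ hτ ↦ ?_)
      (fun τ hτ ↦ ?_) <;> rw [interior_Icc] at hτ
    · exact (hasDerivAt_mul_exp_xi (hode k τ hτ)
        ((hh.differentiable one_ne_zero) _)).hasDerivWithinAt
    · have hmarginτ := hmargin k (x τ) (hreach k τ (Ioo_subset_Icc_self hτ)) (u k) (huU k)
      have hξ : 0 ≤ xi f g h γ (x τ) (u k) := by linarith [hcbf k]
      exact mul_nonneg (Real.exp_pos _).le hξ
  have hmono : MonotoneOn z (Ici 0) :=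
    ht0 ▸ monotoneOn_Ici_of_monotoneOn_Icc_succ htmono.monotone httop hstep
  intro s hs
  have hzs : z 0 ≤ z s := hmono self_mem_Ici hs hs
  simp only [z, mul_zero, Real.exp_zero, mul_one] at hzs
  exact nonneg_of_mul_nonneg_left (hinit.trans hzs) (Real.exp_pos _)

/-- Proposition 1 (relative degree 1): if on each sampling interval the trajectory stays in a
set `S k` over which `ξ(·,u) - ξ(x_k,u)` is bounded below by a margin `φ k` uniformly in
`u ∈ U`, and the applied input satisfies the sampled-data CBF condition
`ξ(x_k, u_k) + φ k ≥ 0`, then `h(x(t)) ≥ 0` for all `t ≥ 0` whenever `h(x(0)) ≥ 0`. -/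
theorem stmt_2 {n m : ℕ} (f : E n → E n) (g : E n → E m →L[ℝ] E n)
    (hf : LocallyLipschitz f) (hg : LocallyLipschitz g)
    (U : Set (E m)) (h : E n → ℝ) (hh : ContDiff ℝ 1 h) (γ : ℝ) (hγ : 0 < γ)
    (t : ℕ → ℝ) (ht0 : t 0 = 0) (htmono : StrictMono t)
    (httop : Tendsto t atTop atTop)
    (u : ℕ → E m)
    (x : ℝ → E n) (hxc : ContinuousOn x (Ici (0 : ℝ)))
    (hode : ∀ k, ∀ s ∈ Ioo (t k) (t (k + 1)),
      HasDerivAt x (f (x s) + g (x s) (u k)) s)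
    (hinit : 0 ≤ h (x 0))
    (S : ℕ → Set (E n)) (φ : ℕ → ℝ)
    (hreach : ∀ k, ∀ s ∈ Icc (t k) (t (k + 1)), x s ∈ S k)
    (hmargin : ∀ k, ∀ x' ∈ S k, ∀ v ∈ U,
      φ k ≤ xi f g h γ x' v - xi f g h γ (x (t k)) v)
    (huU : ∀ k, u k ∈ U)
    (hcbf : ∀ k, 0 ≤ xi f g h γ (x (t k)) (u k) + φ k) :
    ∀ s, 0 ≤ s → 0 ≤ h (x s) :=
  stmt_2_general f g U h hh γ t ht0 htmono httop u x hxc hode hinit S φ hreach hmargin huU hcbf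
end
end

section
/- (Continuous-time invariance for higher relative degree.) Let x be a closed-loop trajectory of the sampled-data control-affine system, where h has relative degree r. Suppose s_k(x(0)) ≥ 0 for every k = 0, …, r−1, and that for every k ∈ ℕ and every t ∈ (t_k, t_{k+1}) one has ξ(x(t), u_k) ≥ 0, i.e. L_f^r h(x(t)) + L_g L_f^{r−1} h(x(t)) u_k + aᵀη(x(t)) ≥ 0. Then h(x(t)) ≥ 0 for all t ≥ 0. -/
open Set Filter

noncomputable section

/-- Iterated Lie derivative along `f`: `L_f^0 h = h`, `L_f^{k+1} h (x) = ∇(L_f^k h)(x)·f(x)`. -/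
noncomputable def lieIter {n : ℕ} (f : E n → E n) (h : E n → ℝ) : ℕ → E n → ℝ
  | 0 => h
  | k + 1 => fun p => fderiv ℝ (lieIter f h k) p (f p)

/-- The cascaded functions `s_0 = h`, `s_k = L_f s_{k-1} + λ_k s_{k-1}` (using `lam k` as
`λ_k`). -/
noncomputable def cascade {n : ℕ} (f : E n → E n) (h : E n → ℝ) (lam : ℕ → ℝ) :
    ℕ → E n → ℝ
  | 0 => h
  | k + 1 => fun p =>
      fderiv ℝ (cascade f h lam k) p (f p) + lam (k + 1) * cascade f h lam k p

/-- `esym lam k j` is the `j`-th elementary symmetric polynomial `e_j(λ_1, …, λ_k)`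
(so `esym lam k 0 = 1`). -/
noncomputable def esym (lam : ℕ → ℝ) (k j : ℕ) : ℝ :=
  ∑ S ∈ (Finset.Icc 1 k).powersetCard j, ∏ i ∈ S, lam i

/-- The higher-order CBF expression
`ξ(x,u) = L_f^r h(x) + L_g L_f^{r-1} h(x) u + aᵀη(x)`, where `a_i = e_i(λ_1, …, λ_r)` and
`aᵀη(x) = Σ_{i=0}^{r-1} e_{r-i}(λ_1, …, λ_r) · L_f^i h(x)`. -/
noncomputable def xiR {n m : ℕ} (f : E n → E n) (g : E n → E m →L[ℝ] E n)
    (h : E n → ℝ) (lam : ℕ → ℝ) (r : ℕ) (p : E n) (v : E m) : ℝ :=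
  lieIter f h r p + fderiv ℝ (lieIter f h (r - 1)) p (g p v)
    + ∑ i ∈ Finset.range r, esym lam r (r - i) * lieIter f h i p

/-! In closed form `s_k = ∑_{i+j=k} e_i(λ_1, …, λ_k) L_f^j h`, so by the relative-degree assumption
the input enters the derivative of `s_k` along the flow only for `k = r - 1`: there
`d/dt s_{r-1}(x) = ξ(x, u) - λ_r s_{r-1}(x) ≥ -λ_r s_{r-1}(x)`, while for `k < r - 1`
`d/dt s_k(x) = s_{k+1}(x) - λ_{k+1} s_k(x)`. A bound `ẏ ≥ -c y` on every sampling interval makes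
`e^{ct} y(t)` nondecreasing, so `y(0) ≥ 0` propagates to all `t ≥ 0`. Descending from `k = r - 1`
to `k = 0` gives `h(x(t)) = s_0(x(t)) ≥ 0`. -/

open Finset.Nat Finset.HasAntidiagonal

theorem esym_zero_right (lam : ℕ → ℝ) (k : ℕ) : esym lam k 0 = 1 := by
  simp [esym]

theorem esym_eq_zero_of_lt (lam : ℕ → ℝ) {k j : ℕ} (h : k < j) : esym lam k j = 0 := by
  rw [esym, Finset.powersetCard_eq_empty.2 (by simpa using h), Finset.sum_empty]

theorem esym_succ_succ (lam : ℕ → ℝ) (k j : ℕ) :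
    esym lam (k + 1) (j + 1) = esym lam k (j + 1) + lam (k + 1) * esym lam k j := by
  have hk : k + 1 ∉ Finset.Icc 1 k := by simp
  have hIcc : Finset.Icc 1 (k + 1) = insert (k + 1) (Finset.Icc 1 k) := by
    ext i; simp only [Finset.mem_Icc, Finset.mem_insert]; omega
  have hnot : ∀ S ∈ (Finset.Icc 1 k).powersetCard j, k + 1 ∉ S := fun S hS hmem =>
    hk ((Finset.mem_powersetCard.1 hS).1 hmem)
  have hinj : Set.InjOn (insert (k + 1)) ((Finset.Icc 1 k).powersetCard j : Set (Finset ℕ)) :=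
    fun S hS T hT hST => by
      simpa [Finset.erase_insert, hnot S hS, hnot T hT] using congrArg (Finset.erase · (k + 1)) hST
  rw [esym, hIcc, Finset.powersetCard_succ_insert hk, Finset.sum_union, Finset.sum_image hinj,
    esym, esym, Finset.mul_sum]
  · exact congrArg _ (Finset.sum_congr rfl fun S hS => Finset.prod_insert (hnot S hS))
  · refine Finset.disjoint_left.2 fun S hS hS' => ?_
    obtain ⟨T, -, rfl⟩ := Finset.mem_image.1 hS'
    exact hk ((Finset.mem_powersetCard.1 hS).1 (Finset.mem_insert_self _ _))

theorem sum_antidiagonal_esym_succ_mul (lam : ℕ → ℝ) (L : ℕ → ℝ) (k : ℕ) :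
    ∑ p ∈ antidiagonal (k + 1), esym lam (k + 1) p.1 * L p.2
      = ∑ p ∈ antidiagonal k, esym lam k p.1 * L (p.2 + 1)
        + lam (k + 1) * ∑ p ∈ antidiagonal k, esym lam k p.1 * L p.2 := by
  have hshift : ∑ p ∈ antidiagonal k, esym lam k p.1 * L (p.2 + 1)
      = L (k + 1) + ∑ p ∈ antidiagonal k, esym lam k (p.1 + 1) * L p.2 := by
    have h₁ := sum_antidiagonal_succ' (f := fun p => esym lam k p.1 * L p.2) (n := k)
    have h₂ := sum_antidiagonal_succ (f := fun p => esym lam k p.1 * L p.2) (n := k)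
    simp only [esym_eq_zero_of_lt lam (Nat.lt_succ_self k), esym_zero_right] at h₁ h₂
    linarith
  rw [sum_antidiagonal_succ, hshift]
  simp only [esym_succ_succ, esym_zero_right, add_mul, Finset.sum_add_distrib, Finset.mul_sum,
    mul_assoc]
  ring

section LieDerivatives

variable {n : ℕ} {f : E n → E n} {h : E n → ℝ}

theorem contDiff_lieIter {r : ℕ} (hf : ContDiff ℝ (r - 1 : ℕ) f) (hh : ContDiff ℝ r h) {j : ℕ}
    (hj : j ≤ r) : ContDiff ℝ (r - j : ℕ) (lieIter f h j) := by
  induction j with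
  | zero => simpa [lieIter] using hh
  | succ j ih =>
    have hL : ContDiff ℝ (r - (j + 1) + 1 : ℕ) (lieIter f h j) := by
      convert ih (by omega) using 2; omega
    exact (hL.fderiv_right le_rfl).clm_apply (hf.of_le (by exact_mod_cast (by omega)))

theorem differentiable_lieIter {r : ℕ} (hf : ContDiff ℝ (r - 1 : ℕ) f) (hh : ContDiff ℝ r h)
    {j : ℕ} (hj : j < r) : Differentiable ℝ (lieIter f h j) :=
  (contDiff_lieIter hf hh hj.le).differentiable (by exact_mod_cast (by omega : r - j ≠ 0))

variable (lam : ℕ → ℝ) {k : ℕ}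

theorem hasFDerivAt_sum_esym_mul_lieIter (hL : ∀ j ≤ k, Differentiable ℝ (lieIter f h j))
    (p : E n) :
    HasFDerivAt (fun p => ∑ q ∈ antidiagonal k, esym lam k q.1 * lieIter f h q.2 p)
      (∑ q ∈ antidiagonal k, esym lam k q.1 • fderiv ℝ (lieIter f h q.2) p) p :=
  HasFDerivAt.fun_sum fun q hq =>
    ((hL q.2 (by simp [← mem_antidiagonal.1 hq])).differentiableAt.hasFDerivAt).const_mul _

theorem cascade_eq_sum (hL : ∀ j < k, Differentiable ℝ (lieIter f h j)) :
    cascade f h lam k = fun p => ∑ q ∈ antidiagonal k, esym lam k q.1 * lieIter f h q.2 p := by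
  induction k with
  | zero => ext p; simp [cascade, lieIter, esym_zero_right]
  | succ k ih =>
    ext p
    have ih := ih fun j hj => hL j (by omega)
    change fderiv ℝ (cascade f h lam k) p (f p) + lam (k + 1) * cascade f h lam k p = _
    rw [ih, (hasFDerivAt_sum_esym_mul_lieIter lam (fun j hj => hL j (by omega)) p).fderiv]
    simp only [sum_apply, smul_apply, smul_eq_mul]
    exact (sum_antidiagonal_esym_succ_mul lam (fun j => lieIter f h j p) k).symm

theorem hasFDerivAt_cascade (hL : ∀ j ≤ k, Differentiable ℝ (lieIter f h j)) (p : E n) :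
    HasFDerivAt (cascade f h lam k)
      (∑ q ∈ antidiagonal k, esym lam k q.1 • fderiv ℝ (lieIter f h q.2) p) p := by
  rw [cascade_eq_sum lam fun j hj => hL j hj.le]
  exact hasFDerivAt_sum_esym_mul_lieIter lam hL p

theorem fderiv_cascade_apply_of_forall_lt (hL : ∀ j ≤ k, Differentiable ℝ (lieIter f h j))
    {p w : E n} (hw : ∀ j < k, fderiv ℝ (lieIter f h j) p w = 0) :
    fderiv ℝ (cascade f h lam k) p w = fderiv ℝ (lieIter f h k) p w := by
  rw [(hasFDerivAt_cascade lam hL p).fderiv, sum_apply,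
    Finset.sum_eq_single_of_mem (0, k) (by simp), smul_apply, esym_zero_right, one_smul]
  intro q hq hq0
  have hq := mem_antidiagonal.1 hq
  have hq₁ : q.1 ≠ 0 := fun h₀ => hq0 (Prod.ext h₀ (by omega))
  rw [smul_apply, hw q.2 (by omega), smul_zero]

theorem hasDerivAt_cascade_comp {x : ℝ → E n} {s : ℝ} {w : E n}
    (hk : DifferentiableAt ℝ (cascade f h lam k) (x s)) (hx : HasDerivAt x (f (x s) + w) s) :
    HasDerivAt (fun s => cascade f h lam k (x s))
      (cascade f h lam (k + 1) (x s) - lam (k + 1) * cascade f h lam k (x s)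
        + fderiv ℝ (cascade f h lam k) (x s) w) s := by
  refine (hk.hasFDerivAt.comp_hasDerivAt s hx).congr_deriv ?_
  rw [map_add]
  simp only [cascade]
  ring

end LieDerivatives

section Comparison

theorem monotoneOn_exp_mul_of_hasDerivAt_ge {a b c : ℝ} {y : ℝ → ℝ}
    (hy : ContinuousOn y (Icc a b))
    (hder : ∀ s ∈ Ioo a b, ∃ d, HasDerivAt y d s ∧ -(c * y s) ≤ d) :
    MonotoneOn (fun s => Real.exp (c * s) * y s) (Icc a b) := by
  have hz : ∀ s ∈ Ioo a b, ∃ d, HasDerivAt (fun s => Real.exp (c * s) * y s) d s ∧ 0 ≤ d := by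
    intro s hs
    obtain ⟨d, hd, hd_ge⟩ := hder s hs
    refine ⟨_, (((hasDerivAt_id s).const_mul c).exp).mul hd, ?_⟩
    have := Real.exp_pos (c * s)
    simp only [id, mul_one]
    nlinarith
  refine monotoneOn_of_deriv_nonneg (convex_Icc a b)
    ((Real.continuous_exp.comp (continuous_const_mul c)).continuousOn.mul hy) ?_ ?_ <;>
    rw [interior_Icc] <;> intro s hs <;> obtain ⟨d, hd, hd_nonneg⟩ := hz s hs
  · exact hd.differentiableAt.differentiableWithinAt
  · rwa [hd.deriv]

theorem MonotoneOn.Icc_of_Icc_succ {z : ℝ → ℝ} {t : ℕ → ℝ} (ht : Monotone t)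
    (hz : ∀ k, MonotoneOn z (Icc (t k) (t (k + 1)))) (k : ℕ) :
    MonotoneOn z (Icc (t 0) (t k)) := by
  induction k with
  | zero => simp
  | succ k ih =>
    rw [← Icc_union_Icc_eq_Icc (ht k.zero_le) (ht k.le_succ)]
    exact ih.union_right (hz k) (isGreatest_Icc (ht k.zero_le)) (isLeast_Icc (ht k.le_succ))

theorem nonneg_of_hasDerivAt_ge_neg_mul {t : ℕ → ℝ} (ht : Monotone t)
    (ht_top : Tendsto t atTop atTop) {c : ℝ} {y : ℝ → ℝ} (hy : ContinuousOn y (Ici (t 0)))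
    (hy₀ : 0 ≤ y (t 0))
    (hder : ∀ k, ∀ s ∈ Ioo (t k) (t (k + 1)), ∃ d, HasDerivAt y d s ∧ -(c * y s) ≤ d)
    {s : ℝ} (hs : t 0 ≤ s) : 0 ≤ y s := by
  have hmono := MonotoneOn.Icc_of_Icc_succ ht fun k =>
    monotoneOn_exp_mul_of_hasDerivAt_ge (hy.mono fun s hs => (ht k.zero_le).trans hs.1) (hder k)
  obtain ⟨k, hk⟩ := (ht_top.eventually_ge_atTop s).exists
  have hz := hmono k ⟨le_rfl, ht k.zero_le⟩ ⟨hs, hk⟩ hs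
  exact nonneg_of_mul_nonneg_right ((mul_nonneg (Real.exp_pos _).le hy₀).trans hz)
    (Real.exp_pos _)

end Comparison

theorem xiR_eq_cascade_add {n m r : ℕ} {f : E n → E n} {h : E n → ℝ}
    (g : E n → E m →L[ℝ] E n) (lam : ℕ → ℝ) (hL : ∀ j < r, Differentiable ℝ (lieIter f h j))
    (p : E n) (v : E m) :
    xiR f g h lam r p v = cascade f h lam r p + fderiv ℝ (lieIter f h (r - 1)) p (g p v) := by
  simp only [xiR, cascade_eq_sum lam hL]
  rw [← sum_antidiagonal_swap]
  simp only [Prod.fst_swap, Prod.snd_swap]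
  rw [sum_antidiagonal_eq_sum_range_succ (fun i j => esym lam r j * lieIter f h i p),
    Finset.sum_range_succ, Nat.sub_self, esym_zero_right]
  ring

theorem cascade_comp_nonneg {n m : ℕ} {f : E n → E n} {g : E n → E m →L[ℝ] E n}
    {h : E n → ℝ} (lam : ℕ → ℝ) {t : ℕ → ℝ} (ht₀ : t 0 = 0) (ht : Monotone t)
    (ht_top : Tendsto t atTop atTop) {u : ℕ → E m} {x : ℝ → E n}
    (hx : ContinuousOn x (Ici 0))
    (hode : ∀ i, ∀ s ∈ Ioo (t i) (t (i + 1)), HasDerivAt x (f (x s) + g (x s) (u i)) s)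
    {k : ℕ} (hk : Differentiable ℝ (cascade f h lam k)) (h₀ : 0 ≤ cascade f h lam k (x 0))
    (hnext : ∀ i, ∀ s ∈ Ioo (t i) (t (i + 1)),
      0 ≤ cascade f h lam (k + 1) (x s) + fderiv ℝ (cascade f h lam k) (x s) (g (x s) (u i)))
    {s : ℝ} (hs : 0 ≤ s) : 0 ≤ cascade f h lam k (x s) := by
  refine nonneg_of_hasDerivAt_ge_neg_mul ht ht_top (c := lam (k + 1))
    (y := fun s => cascade f h lam k (x s))
    (hk.continuous.comp_continuousOn (by rwa [ht₀])) (by rwa [ht₀]) ?_ (by rwa [ht₀])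
  intro i s hs
  exact ⟨_, hasDerivAt_cascade_comp lam hk.differentiableAt (hode i s hs),
    by linarith [hnext i s hs]⟩

theorem stmt_7_general {n m : ℕ} (r : ℕ) (hr : 2 ≤ r)
    (f : E n → E n) (hf : ContDiff ℝ (r - 1 : ℕ) f)
    (g : E n → E m →L[ℝ] E n)
    (h : E n → ℝ) (hh : ContDiff ℝ (r : ℕ) h)
    (lam : ℕ → ℝ)
    (hreldeg : ∀ k, k + 2 ≤ r → ∀ p : E n, ∀ v : E m,
      fderiv ℝ (lieIter f h k) p (g p v) = 0)
    (t : ℕ → ℝ) (ht0 : t 0 = 0) (htmono : StrictMono t)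
    (httop : Tendsto t atTop atTop)
    (u : ℕ → E m)
    (x : ℝ → E n) (hxc : ContinuousOn x (Ici (0 : ℝ)))
    (hode : ∀ k, ∀ s ∈ Ioo (t k) (t (k + 1)),
      HasDerivAt x (f (x s) + g (x s) (u k)) s)
    (hinit : ∀ k < r, 0 ≤ cascade f h lam k (x 0))
    (hsafe : ∀ k, ∀ s ∈ Ioo (t k) (t (k + 1)), 0 ≤ xiR f g h lam r (x s) (u k)) :
    ∀ s, 0 ≤ s → 0 ≤ h (x s) := by
  have hL : ∀ j < r, Differentiable ℝ (lieIter f h j) := fun j hj =>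
    differentiable_lieIter hf hh hj
  have hgrad : ∀ k < r, ∀ p v, fderiv ℝ (cascade f h lam k) p (g p v)
      = fderiv ℝ (lieIter f h k) p (g p v) := fun k hk p v =>
    fderiv_cascade_apply_of_forall_lt lam (fun j hj => hL j (by omega))
      fun j hj => hreldeg j (by omega) p v
  have hstep := fun k (hk : k < r) => cascade_comp_nonneg lam ht0 htmono.monotone httop hxc hode
    (fun p => (hasFDerivAt_cascade lam (fun j hj => hL j (by omega)) p).differentiableAt)
    (hinit k hk)
  have hcascade : ∀ k ≤ r - 1, ∀ s, 0 ≤ s → 0 ≤ cascade f h lam k (x s) := by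
    intro k hk
    induction hk using Nat.decreasingInduction with
    | self =>
      refine fun s => hstep (r - 1) (by omega) fun i s hs => ?_
      rw [hgrad _ (by omega), Nat.sub_add_cancel (by omega), ← xiR_eq_cascade_add g lam hL]
      exact hsafe i s hs
    | of_succ k hk ih =>
      refine fun s => hstep k (by omega) fun i s hs => ?_
      rw [hgrad k (by omega), hreldeg k (by omega), add_zero]
      exact ih s ((ht0 ▸ htmono.monotone i.zero_le).trans hs.1.le)
  exact hcascade 0 (Nat.zero_le _)

/-- Continuous-time invariance for higher relative degree: if `s_k(x(0)) ≥ 0` for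
`k = 0, …, r-1` and `ξ(x(t), u_k) ≥ 0` for all `k` and all `t ∈ (t_k, t_{k+1})` along the
closed-loop sampled-data trajectory, then `h(x(t)) ≥ 0` for all `t ≥ 0`. -/
theorem stmt_7 {n m : ℕ} (r : ℕ) (hr : 2 ≤ r)
    (f : E n → E n) (hfl : LocallyLipschitz f) (hf : ContDiff ℝ (r - 1 : ℕ) f)
    (g : E n → E m →L[ℝ] E n) (hgl : LocallyLipschitz g)
    (U : Set (E m))
    (h : E n → ℝ) (hh : ContDiff ℝ (r : ℕ) h)
    (lam : ℕ → ℝ) (hlam : ∀ i, 1 ≤ i → i ≤ r → 0 < lam i)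
    (hreldeg : ∀ k, k + 2 ≤ r → ∀ p : E n, ∀ v : E m,
      fderiv ℝ (lieIter f h k) p (g p v) = 0)
    (t : ℕ → ℝ) (ht0 : t 0 = 0) (htmono : StrictMono t)
    (httop : Tendsto t atTop atTop)
    (u : ℕ → E m) (hu : ∀ k, u k ∈ U)
    (x : ℝ → E n) (hxc : ContinuousOn x (Ici (0 : ℝ)))
    (hode : ∀ k, ∀ s ∈ Ioo (t k) (t (k + 1)),
      HasDerivAt x (f (x s) + g (x s) (u k)) s)
    (hinit : ∀ k < r, 0 ≤ cascade f h lam k (x 0))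
    (hsafe : ∀ k, ∀ s ∈ Ioo (t k) (t (k + 1)), 0 ≤ xiR f g h lam r (x s) (u k)) :
    ∀ s, 0 ≤ s → 0 ≤ h (x s) :=
  stmt_7_general r hr f hf g h hh lam hreldeg t ht0 htmono httop u x hxc hode hinit hsafe
end
end
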